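/- Let (X, 𝒜, μ) be a measure space with μ(X) ≤ 1, and let w : X → ℝ be μ-integrable. Then ∫_X ( log₊|w(y)| )² μ(dy) ≤ ( 2 + log₊( ∫_X |w(y)| μ(dy) ) )². -/

import Mathlib

open MeasureTheory

noncomputable def logPlus (u : ℝ) : ℝ := Real.log (max 1 u)

lemma logPlus_nonneg' (u : ℝ) : 0 ≤ logPlus u := Real.log_nonneg (le_max_left _ _)

lemma logPlus_le_self' {v : ℝ} (hv : 0 ≤ v) : logPlus v ≤ v := by
  have h1 : (0:ℝ) < max 1 v := lt_of_lt_of_le one_pos (le_max_left _ _)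
  have h2 := Real.log_le_sub_one_of_pos h1
  have h3 : max 1 v ≤ v + 1 := max_le (by linarith) (by linarith)
  unfold logPlus
  linarith

lemma sq_logPlus_le' {v : ℝ} (hv : 0 ≤ v) : (logPlus v)^2 ≤ 4 * v := by
  rcases le_or_gt v 1 with h | h
  · have : max 1 v = 1 := max_eq_left h
    simp [logPlus, this]
    linarith
  · have hmax : max 1 v = v := max_eq_right h.le
    have hs1 : 1 ≤ Real.sqrt v := by
      rw [show (1:ℝ) = Real.sqrt 1 by simp]
      exact Real.sqrt_le_sqrt h.le
    have hs0 : 0 < Real.sqrt v := by linarith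
    have hsq : Real.sqrt v * Real.sqrt v = v := Real.mul_self_sqrt hv
    have hlog : Real.log v = 2 * Real.log (Real.sqrt v) := by
      rw [Real.log_sqrt hv]; ring
    have hle : Real.log (Real.sqrt v) ≤ Real.sqrt v - 1 :=
      Real.log_le_sub_one_of_pos hs0
    have hge : 0 ≤ Real.log (Real.sqrt v) := Real.log_nonneg hs1
    unfold logPlus
    rw [hmax, hlog]
    nlinarith [sq_nonneg (Real.sqrt v - 1)]

lemma key_pointwise (u a : ℝ) (hu : 0 ≤ u) (ha : 0 ≤ a) :
    (logPlus u)^2 ≤ a^2 + (2*a+4) * (Real.exp (-a) * u) := by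
  set e := Real.exp (-a) with he
  have he0 : 0 < e := Real.exp_pos _
  set v := logPlus (u * e) with hv
  have hv0 : 0 ≤ v := logPlus_nonneg' _
  have hue : 0 ≤ u * e := mul_nonneg hu he0.le
  have hv1 : v ≤ u * e := logPlus_le_self' hue
  have hv2 : v^2 ≤ 4 * (u * e) := sq_logPlus_le' hue
  have h1 : logPlus u ≤ a + v := by
    rcases le_or_gt u (Real.exp a) with h | h
    · have : max 1 u ≤ Real.exp a :=
        max_le (Real.one_le_exp ha) h
      have := Real.log_le_log (by positivity) this
      rw [Real.log_exp] at this
      unfold logPlus; linarith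
    · have hea : (1:ℝ) ≤ Real.exp a := Real.one_le_exp ha
      have hu1 : 1 < u := lt_of_le_of_lt hea h
      have hmu : max 1 u = u := max_eq_right hu1.le
      have hue1 : 1 < u * e := by
        have := mul_lt_mul_of_pos_right h he0
        rwa [← Real.exp_add, add_neg_cancel, Real.exp_zero] at this
      have hmue : max 1 (u * e) = u * e := max_eq_right hue1.le
      have : v = Real.log u - a := by
        rw [hv]; unfold logPlus
        rw [hmue, Real.log_mul (by linarith) he0.ne', he, Real.log_exp]; ring
      unfold logPlus
      rw [hmu]
      linarith
  have hlp : 0 ≤ logPlus u := logPlus_nonneg' u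
  nlinarith [sq_nonneg (a + v - logPlus u)]

theorem stmt_13 {X : Type*} [MeasurableSpace X] (μ : Measure X)
    (hμ : μ Set.univ ≤ 1) (w : X → ℝ) (hw : Integrable w μ) :
    (∫ y, (logPlus |w y|) ^ 2 ∂μ) ≤ (2 + logPlus (∫ y, |w y| ∂μ)) ^ 2 := by
  haveI : IsFiniteMeasure μ := ⟨lt_of_le_of_lt hμ ENNReal.one_lt_top⟩
  set I := ∫ y, |w y| ∂μ with hIdef
  have hI0 : 0 ≤ I := integral_nonneg fun y => abs_nonneg _
  set L := logPlus I with hLdef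
  have hL0 : 0 ≤ L := logPlus_nonneg' I
  set a := L + 1 with hadef
  have ha1 : 1 ≤ a := by linarith
  have ha0 : 0 ≤ a := by linarith
  set c := (2*a+4) * Real.exp (-a) with hcdef
  have hc0 : 0 ≤ c := by positivity
  have hgint : Integrable (fun y => a^2 + c * |w y|) μ :=
    (integrable_const _).add (hw.abs.const_mul c)
  have hmono : (∫ y, (logPlus |w y|) ^ 2 ∂μ) ≤ ∫ y, (a^2 + c * |w y|) ∂μ := by
    apply integral_mono_of_nonneg
    · exact Filter.Eventually.of_forall fun y => sq_nonneg _
    · exact hgint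
    · apply Filter.Eventually.of_forall
      intro y
      have := key_pointwise |w y| a (abs_nonneg _) ha0
      simp only [hcdef]
      nlinarith [this]
  have hint : (∫ y, (a^2 + c * |w y|) ∂μ) = a^2 * (μ Set.univ).toReal + c * I := by
    rw [integral_add (integrable_const _) (hw.abs.const_mul c),
      integral_const, integral_const_mul]
    simp [mul_comm, measureReal_def, hIdef]
  have hm1 : (μ Set.univ).toReal ≤ 1 := by
    have := ENNReal.toReal_mono ENNReal.one_ne_top hμ
    simpa using this
  have hm0 : 0 ≤ (μ Set.univ).toReal := ENNReal.toReal_nonneg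
  -- bound exp(-a) * I ≤ exp(-1)
  have hexpL : Real.exp L = max 1 I := by
    rw [hLdef]; unfold logPlus
    exact Real.exp_log (lt_of_lt_of_le one_pos (le_max_left _ _))
  have hIL : I ≤ Real.exp L := by rw [hexpL]; exact le_max_right _ _
  have hEI : Real.exp (-a) * I ≤ Real.exp (-1) := by
    have h1 : Real.exp (-a) = Real.exp (-1) * Real.exp (-L) := by
      rw [← Real.exp_add, hadef]; ring_nf
    rw [h1, mul_assoc]
    have h2 : Real.exp (-L) * I ≤ 1 := by
      have := mul_le_mul_of_nonneg_left hIL (Real.exp_pos (-L)).le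
      rwa [← Real.exp_add, neg_add_cancel, Real.exp_zero] at this
    nlinarith [Real.exp_pos (-1)]
  have hcI : c * I ≤ (2*a+4) * Real.exp (-1) := by
    rw [hcdef, mul_assoc]
    exact mul_le_mul_of_nonneg_left hEI (by linarith)
  have hexp1 : Real.exp (-1) ≤ 0.37 := by
    rw [Real.exp_neg]
    rw [inv_le_iff_one_le_mul₀ (by positivity)]
    nlinarith [Real.exp_one_gt_d9]
  have hfinal : a^2 * (μ Set.univ).toReal + c * I ≤ (2 + L)^2 := by
    have h1 : a^2 * (μ Set.univ).toReal ≤ a^2 := by nlinarith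
    have h2 : (2*a+4) * Real.exp (-1) ≤ 2*a + 1 := by
      nlinarith [Real.exp_pos (-1)]
    have : (2 + L)^2 = a^2 + (2*a + 1) := by rw [hadef]; ring
    linarith
  calc (∫ y, (logPlus |w y|) ^ 2 ∂μ) ≤ ∫ y, (a^2 + c * |w y|) ∂μ := hmono
    _ = a^2 * (μ Set.univ).toReal + c * I := hint
    _ ≤ (2 + L)^2 := hfinal
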